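/- arXiv:0710.3509 — 3 statements merged into one kernel-verified Lean document; each statement's English description precedes it below -/
import Mathlib

section
/- Let v : ℝ^d → ℝ^d be continuously differentiable with bounded derivative along a fixed continuous curve x : [0,T] → ℝ^d, and for a continuously differentiable F : [0,T] → ℝ^d with F(0) = 0 let UF denote the unique solution of u'(t) = F'(t) + v'(x(t)) u(t), u(0) = 0. Then the map U from (C₀¹[0,T], sup-norm) to (C[0,T], sup-norm) is Lipschitz: sup_{0≤t≤T} |UF(t) − UG(t)| ≤ C · sup_{0≤t≤T} |F(t) − G(t)| where C depends only on sup_{0≤t≤T} ‖v'(x(t))‖ and T. -/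
open Set

/-! With `w = uF - uG` and `f = F - G`, the error `y = w - f` starts at `0` and satisfies
`y' = A (y + f)`, so `‖y'‖ ≤ K ‖y‖ + K M`. Gronwall's inequality gives `‖y t‖ ≤ M (e^{Kt} - 1)`,
hence `‖w t‖ ≤ ‖y t‖ + ‖f t‖ ≤ M e^{Kt} ≤ e^{KT} M`. -/

theorem gronwallBound_zero_mul_right (K M x : ℝ) :
    gronwallBound 0 K (K * M) x = M * (Real.exp (K * x) - 1) := by
  rcases eq_or_ne K 0 with rfl | hK
  · simp [gronwallBound_K0]
  · rw [gronwallBound_of_K_ne_0 hK, mul_div_cancel_left₀ M hK]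
    ring

variable {E : Type*} [NormedAddCommGroup E] [NormedSpace ℝ E]

theorem norm_le_exp_mul_of_hasDerivAt_add_clm {w f f' : ℝ → E} {A : ℝ → E →L[ℝ] E}
    {a b K M : ℝ} (hw : ∀ t ∈ Icc a b, HasDerivAt w (f' t + A t (w t)) t)
    (hf : ∀ t ∈ Icc a b, HasDerivAt f (f' t) t) (hwa : w a = f a)
    (hA : ∀ t ∈ Icc a b, ‖A t‖ ≤ K) (hfM : ∀ t ∈ Icc a b, ‖f t‖ ≤ M) :
    ∀ t ∈ Icc a b, ‖w t‖ ≤ Real.exp (K * (t - a)) * M := by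
  intro t ht
  have ha : a ∈ Icc a b := ⟨le_rfl, ht.1.trans ht.2⟩
  have hK : 0 ≤ K := (norm_nonneg _).trans (hA a ha)
  have hy : ∀ s ∈ Icc a b, HasDerivAt (fun s => w s - f s) (A s (w s)) s := fun s hs =>
    ((hw s hs).sub (hf s hs)).congr_deriv (add_sub_cancel_left _ _)
  have hy_bound : ∀ s ∈ Icc a b, ‖w s - f s‖ ≤ M * (Real.exp (K * (s - a)) - 1) := by
    intro s hs
    rw [← gronwallBound_zero_mul_right]
    refine norm_le_gronwallBound_of_norm_deriv_right_le
      (fun s hs => (hy s hs).continuousAt.continuousWithinAt)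
      (fun s hs => (hy s (Ico_subset_Icc_self hs)).hasDerivWithinAt)
      (by simp [hwa]) (fun s hs => ?_) s hs
    have hs := Ico_subset_Icc_self hs
    calc ‖A s (w s)‖ ≤ K * ‖w s‖ := (A s).le_of_opNorm_le (hA s hs) _
      _ ≤ K * (‖w s - f s‖ + M) := by
          gcongr
          exact (norm_le_norm_sub_add _ _).trans (by gcongr; exact hfM s hs)
      _ = K * ‖w s - f s‖ + K * M := mul_add _ _ _
  calc ‖w t‖ ≤ ‖w t - f t‖ + ‖f t‖ := norm_le_norm_sub_add _ _
    _ ≤ M * (Real.exp (K * (t - a)) - 1) + M := add_le_add (hy_bound t ht) (hfM t ht)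
    _ = Real.exp (K * (t - a)) * M := by ring

theorem stmt_2_general (d : ℕ) (T : ℝ)
    (A : ℝ → EuclideanSpace ℝ (Fin d) →L[ℝ] EuclideanSpace ℝ (Fin d))
    (K : ℝ) (hK : ∀ t ∈ Icc 0 T, ‖A t‖ ≤ K)
    (F G F' G' uF uG : ℝ → EuclideanSpace ℝ (Fin d))
    (hF0 : F 0 = 0) (hG0 : G 0 = 0)
    (hF : ∀ t ∈ Icc 0 T, HasDerivAt F (F' t) t)
    (hG : ∀ t ∈ Icc 0 T, HasDerivAt G (G' t) t)
    (huF0 : uF 0 = 0) (huG0 : uG 0 = 0)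
    (huF : ∀ t ∈ Icc 0 T, HasDerivAt uF (F' t + A t (uF t)) t)
    (huG : ∀ t ∈ Icc 0 T, HasDerivAt uG (G' t + A t (uG t)) t)
    (M : ℝ) (hM : ∀ t ∈ Icc 0 T, ‖F t - G t‖ ≤ M) :
    ∀ t ∈ Icc 0 T, ‖uF t - uG t‖ ≤ Real.exp (K * T) * M := by
  intro t ht
  have hw : ∀ s ∈ Icc 0 T, HasDerivAt (fun s => uF s - uG s)
      ((F' s - G' s) + A s (uF s - uG s)) s := fun s hs =>
    ((huF s hs).sub (huG s hs)).congr_deriv (by rw [map_sub]; abel)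
  have hdiff := norm_le_exp_mul_of_hasDerivAt_add_clm hw (fun s hs => (hF s hs).sub (hG s hs))
    (by simp [hF0, hG0, huF0, huG0]) hK hM t ht
  have hK0 : 0 ≤ K := (norm_nonneg _).trans (hK t ht)
  have hM0 : 0 ≤ M := (norm_nonneg _).trans (hM t ht)
  refine hdiff.trans (mul_le_mul_of_nonneg_right (Real.exp_le_exp.2 ?_) hM0)
  rw [sub_zero]
  exact mul_le_mul_of_nonneg_left ht.2 hK0

/-- Lipschitz continuity of the solution operator `U` of the linear inhomogeneous ODE
`u'(t) = F'(t) + v'(x(t)) u(t)`, `u(0) = 0`, with Lipschitz constant depending only on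
`K = sup ‖v'(x(t))‖` and `T`. Here `A t = v'(x(t))` along the fixed curve `x`. -/
theorem stmt_2 (d : ℕ) (T : ℝ) (hT : 0 < T)
    (v : EuclideanSpace ℝ (Fin d) → EuclideanSpace ℝ (Fin d)) (hv : ContDiff ℝ 1 v)
    (x : ℝ → EuclideanSpace ℝ (Fin d)) (hx : ContinuousOn x (Icc 0 T))
    (A : ℝ → EuclideanSpace ℝ (Fin d) →L[ℝ] EuclideanSpace ℝ (Fin d))
    (hA : ∀ t, A t = fderiv ℝ v (x t))
    (K : ℝ) (hK : ∀ t ∈ Icc 0 T, ‖A t‖ ≤ K)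
    (F G F' G' uF uG : ℝ → EuclideanSpace ℝ (Fin d))
    (hF0 : F 0 = 0) (hG0 : G 0 = 0)
    (hF : ∀ t ∈ Icc 0 T, HasDerivAt F (F' t) t)
    (hG : ∀ t ∈ Icc 0 T, HasDerivAt G (G' t) t)
    (hF'c : ContinuousOn F' (Icc 0 T)) (hG'c : ContinuousOn G' (Icc 0 T))
    (huF0 : uF 0 = 0) (huG0 : uG 0 = 0)
    (huF : ∀ t ∈ Icc 0 T, HasDerivAt uF (F' t + A t (uF t)) t)
    (huG : ∀ t ∈ Icc 0 T, HasDerivAt uG (G' t + A t (uG t)) t)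
    (M : ℝ) (hM : ∀ t ∈ Icc 0 T, ‖F t - G t‖ ≤ M) :
    ∀ t ∈ Icc 0 T, ‖uF t - uG t‖ ≤ Real.exp (K * T) * M :=
  stmt_2_general d T A K hK F G F' G' uF uG hF0 hG0 hF hG huF0 huG0 huF huG M hM
end

section
/- Let φ : ℝ^d → ℝ be continuously differentiable, and let x, x_n : [0,T] → ℝ^d be continuous curves with sup_{0≤t≤T} |x_n(t) − x(t)| → 0. Let M = {τ ∈ [0,T] : φ(x(τ)) = inf_{0≤t≤T} φ(x(t))} and suppose a_n(x_n − x) converges uniformly on [0,T] to a continuous function ξ, where a_n → ∞. Then a_n [inf_{t∈[0,T]} φ(x_n(t)) − inf_{t∈[0,T]} φ(x(t))] → inf_{τ∈M} ⟨ξ(τ), ∇φ(x(τ))⟩. -/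
/-!
Put `f = φ ∘ x` and `g t = Dφ(x t)(ξ t) = ⟪ξ t, ∇φ(x t)⟫`. Since `Dφ` is uniformly continuous near
the compact curve `x([0,T])`, the first-order Taylor remainder of `φ` is uniformly small there, so
`a_n (φ ∘ x_n - f) → g` uniformly and `inf (φ ∘ x_n) = inf (f + g / a_n) + o(1 / a_n)`.

What is left is Danskin's theorem: `c (inf (f + g / c) - min f) → inf_M g` as `c → ∞`. A minimiser
of `g` on the argmin set `M` gives the upper bound. For `b < inf_M g`, the compact set `{g ≤ b}`
misses `M`, so `f` stays a positive distance above `min f` on it and the penalty `c (f - min f)`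
eventually pushes `c (f - min f) + g` above `b` everywhere.
-/

open Set Filter Topology Metric

section TaylorRemainder
variable {E F : Type*} [NormedAddCommGroup E] [NormedSpace ℝ E] [NormedAddCommGroup F]
  [NormedSpace ℝ F]

theorem ContDiff.exists_norm_sub_sub_fderiv_le {φ : E → F} (hφ : ContDiff ℝ 1 φ) {C : Set E}
    (hC : IsCompact C) {ε : ℝ} (hε : 0 < ε) :
    ∃ δ > 0, ∀ z ∈ C, ∀ y, ‖y - z‖ < δ →
      ‖φ y - φ z - fderiv ℝ φ z (y - z)‖ ≤ ε * ‖y - z‖ := by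
  obtain ⟨δ, hδ, hclose⟩ := mem_uniformity_dist.1 <|
    hC.uniformContinuousAt_of_continuousAt (fderiv ℝ φ)
      (fun z _ => (hφ.continuous_fderiv one_ne_zero).continuousAt) (dist_mem_uniformity hε)
  refine ⟨δ, hδ, fun z hz y hy => ?_⟩
  have hderiv : ∀ w ∈ ball z δ, ‖fderiv ℝ φ w - fderiv ℝ φ z‖ ≤ ε := fun w hw => by
    rw [← dist_eq_norm, dist_comm]
    exact (hclose (mem_ball'.1 hw) hz).le
  exact (convex_ball z δ).norm_image_sub_le_of_norm_fderiv_le'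
    (fun w _ => (hφ.differentiable one_ne_zero).differentiableAt) hderiv (mem_ball_self hδ)
    (mem_ball_iff_norm.2 hy)

theorem ContDiff.tendstoUniformlyOn_smul_sub_comp {φ : E → F} (hφ : ContDiff ℝ 1 φ)
    {ι X : Type*} {l : Filter ι} {a : ι → ℝ} {K : Set X} {x ξ : X → E} {xn : ι → X → E}
    (ha : Tendsto a l atTop) (hxK : IsCompact (x '' K)) (hξK : Bornology.IsBounded (ξ '' K))
    (hconv : TendstoUniformlyOn (fun n t => a n • (xn n t - x t)) ξ l K) :
    TendstoUniformlyOn (fun n t => a n • (φ (xn n t) - φ (x t)))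
      (fun t => fderiv ℝ φ (x t) (ξ t)) l K := by
  obtain ⟨B, hB0, hB⟩ := hξK.exists_pos_norm_le
  obtain ⟨D, hD0, hD⟩ := (hxK.image_of_continuousOn
    (hφ.continuous_fderiv one_ne_zero).continuousOn).isBounded.exists_pos_norm_le
  rw [Metric.tendstoUniformlyOn_iff]
  intro ε hε
  obtain ⟨δ, hδ, hrem⟩ := hφ.exists_norm_sub_sub_fderiv_le hxK
    (ε := ε / (2 * (B + 1))) (by positivity)
  filter_upwards [ha.eventually_gt_atTop ((B + 1) / δ),
    Metric.tendstoUniformlyOn_iff.1 hconv (min 1 (ε / (2 * D))) (by positivity)]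
    with n han hclose t ht
  set y := a n • (xn n t - x t)
  have han0 : 0 < a n := lt_trans (by positivity) han
  have hyξ : ‖y - ξ t‖ < min 1 (ε / (2 * D)) := by
    rw [← dist_eq_norm, dist_comm]; exact hclose t ht
  have hy : ‖y‖ < B + 1 := by
    linarith [norm_le_norm_add_norm_sub' y (ξ t), hB _ (mem_image_of_mem ξ ht),
      hyξ.trans_le (min_le_left _ _)]
  have hy_eq : ‖y‖ = a n * ‖xn n t - x t‖ := by
    rw [norm_smul, Real.norm_of_nonneg han0.le]
  have hxn : ‖xn n t - x t‖ < δ := by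
    rw [div_lt_iff₀ hδ] at han
    exact lt_of_mul_lt_mul_left (hy_eq ▸ hy.trans han) han0.le
  have hR := hrem (x t) (mem_image_of_mem x ht) (xn n t) hxn
  have hDx : ‖fderiv ℝ φ (x t)‖ ≤ D := hD _ (mem_image_of_mem _ (mem_image_of_mem x ht))
  rw [dist_comm, dist_eq_norm]
  calc ‖a n • (φ (xn n t) - φ (x t)) - fderiv ℝ φ (x t) (ξ t)‖
      = ‖a n • (φ (xn n t) - φ (x t) - fderiv ℝ φ (x t) (xn n t - x t))
          + fderiv ℝ φ (x t) (y - ξ t)‖ := by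
        congr 1; simp only [y, map_sub, map_smul, smul_sub]; abel
    _ ≤ a n * (ε / (2 * (B + 1)) * ‖xn n t - x t‖) + D * ‖y - ξ t‖ := by
        refine (norm_add_le _ _).trans (add_le_add ?_ ?_)
        · rw [norm_smul, Real.norm_of_nonneg han0.le]; gcongr
        · exact (fderiv ℝ φ (x t)).le_of_opNorm_le hDx _
    _ = ε / (2 * (B + 1)) * ‖y‖ + D * ‖y - ξ t‖ := by rw [hy_eq]; ring
    _ < ε / (2 * (B + 1)) * (B + 1) + D * (ε / (2 * D)) := by
        gcongr
        exact hyξ.trans_le (min_le_right _ _)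
    _ = ε := by field_simp; ring

end TaylorRemainder

theorem abs_sInf_image_sub_sInf_image_le {X : Type*} {K : Set X} (hK : K.Nonempty)
    {u v : X → ℝ} (hv : BddBelow (v '' K)) {ε : ℝ} (huv : ∀ t ∈ K, |u t - v t| ≤ ε) :
    |sInf (u '' K) - sInf (v '' K)| ≤ ε := by
  obtain ⟨B, hB⟩ := hv
  have hu : BddBelow (u '' K) := ⟨B - ε, forall_mem_image.2 fun t ht => by
    linarith [mem_lowerBounds.1 hB _ (mem_image_of_mem v ht), (abs_le.1 (huv t ht)).1]⟩
  rw [abs_le]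
  constructor
  · rw [neg_le_sub_iff_le_add, ← sub_le_iff_le_add]
    refine le_csInf (hK.image u) (forall_mem_image.2 fun t ht => ?_)
    linarith [csInf_le ⟨B, hB⟩ (mem_image_of_mem v ht), (abs_le.1 (huv t ht)).1]
  · rw [sub_le_iff_le_add, ← sub_le_iff_le_add']
    refine le_csInf (hK.image v) (forall_mem_image.2 fun t ht => ?_)
    linarith [csInf_le hu (mem_image_of_mem u ht), (abs_le.1 (huv t ht)).2]

section Danskin
variable {X : Type*} [TopologicalSpace X] {K : Set X} {f g : X → ℝ}

theorem IsCompact.eventually_le_mul_sub_add (hK : IsCompact K) (hf : ContinuousOn f K)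
    (hg : ContinuousOn g K) {m b : ℝ} (hm : ∀ t ∈ K, m ≤ f t)
    (hb : ∀ t ∈ K, f t = m → b < g t) :
    ∀ᶠ c in atTop, ∀ t ∈ K, b ≤ c * (f t - m) + g t := by
  have hA : IsCompact (K ∩ g ⁻¹' Iic b) :=
    hg.lowerSemicontinuousOn.isCompact_inter_preimage_Iic hK b
  obtain ⟨m', hmm', hm'⟩ := hA.exists_forall_le' (hf.mono inter_subset_left)
    fun t ⟨ht, hgt⟩ => (hm t ht).lt_of_ne fun h => (hb t ht h.symm).not_ge hgt
  obtain ⟨G, hG⟩ := hK.exists_bound_of_continuousOn hg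
  filter_upwards [eventually_ge_atTop 0, eventually_ge_atTop ((b + G) / (m' - m))]
    with c hc0 hc t ht
  by_cases hgt : g t ≤ b
  · have hgG : -G ≤ g t := neg_le_of_abs_le (hG t ht)
    have : b + G ≤ c * (f t - m) := calc
      b + G = (b + G) / (m' - m) * (m' - m) := by field_simp [(sub_pos.2 hmm').ne']
      _ ≤ c * (f t - m) := by gcongr; linarith [hm' t ⟨ht, hgt⟩]
    linarith
  · nlinarith [hm t ht]

theorem IsCompact.tendsto_mul_sInf_image_add_inv_mul_sub (hK : IsCompact K) (hne : K.Nonempty)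
    (hf : ContinuousOn f K) (hg : ContinuousOn g K) :
    Tendsto (fun c : ℝ => c * (sInf ((fun t => f t + c⁻¹ * g t) '' K) - sInf (f '' K))) atTop
      (𝓝 (sInf (g '' {t ∈ K | f t = sInf (f '' K)}))) := by
  set m := sInf (f '' K)
  set M := {t ∈ K | f t = m}
  have hm : ∀ t ∈ K, m ≤ f t := fun t ht => csInf_le (hK.bddBelow_image hf) (mem_image_of_mem f ht)
  have hMK : M = K ∩ f ⁻¹' Iic m := by
    ext t
    exact and_congr_right fun ht => ⟨le_of_eq, fun h => h.antisymm (hm t ht)⟩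
  have hM : IsCompact M := hMK ▸ hf.lowerSemicontinuousOn.isCompact_inter_preimage_Iic hK m
  have hMne : M.Nonempty := by
    obtain ⟨τ, hτ, hmin⟩ := hK.exists_isMinOn hne hf
    exact ⟨τ, hτ, (IsLeast.csInf_eq ⟨mem_image_of_mem f hτ, forall_mem_image.2 hmin⟩).symm⟩
  obtain ⟨τ, hτM, hτmin⟩ := hM.exists_isMinOn hMne (hg.mono (sep_subset K _))
  have hgτ : sInf (g '' M) = g τ :=
    IsLeast.csInf_eq ⟨mem_image_of_mem g hτM, forall_mem_image.2 hτmin⟩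
  have hbdd : ∀ c, BddBelow ((fun t => f t + c⁻¹ * g t) '' K) := fun c =>
    hK.bddBelow_image (hf.add (continuousOn_const.mul hg))
  rw [hgτ]
  refine tendsto_order.2 ⟨fun b hb => ?_, fun b hb => ?_⟩
  · obtain ⟨b', hbb', hb'τ⟩ := exists_between hb
    filter_upwards [eventually_gt_atTop 0, hK.eventually_le_mul_sub_add hf hg hm
      fun t ht hft => hb'τ.trans_le (hτmin ⟨ht, hft⟩)] with c hc hpen
    have hS : m + c⁻¹ * b' ≤ sInf ((fun t => f t + c⁻¹ * g t) '' K) :=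
      le_csInf (hne.image _) <| forall_mem_image.2 fun t ht => calc
        m + c⁻¹ * b' ≤ m + c⁻¹ * (c * (f t - m) + g t) := by gcongr; exact hpen t ht
        _ = f t + c⁻¹ * g t := by field_simp; ring
    calc b < b' := hbb'
      _ = c * (c⁻¹ * b') := by field_simp
      _ ≤ _ := by gcongr; linarith
  · filter_upwards [eventually_gt_atTop 0] with c hc
    have hS : sInf ((fun t => f t + c⁻¹ * g t) '' K) ≤ m + c⁻¹ * g τ :=
      hτM.2 ▸ csInf_le (hbdd c) (mem_image_of_mem _ hτM.1)
    calc c * (sInf ((fun t => f t + c⁻¹ * g t) '' K) - m) ≤ c * (c⁻¹ * g τ) := by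
          gcongr; linarith
      _ = g τ := by field_simp
      _ < b := hb

theorem IsCompact.tendsto_mul_sInf_image_sub (hK : IsCompact K) (hne : K.Nonempty)
    (hf : ContinuousOn f K) (hg : ContinuousOn g K) {ι : Type*} {l : Filter ι}
    {fn : ι → X → ℝ} {a : ι → ℝ} (ha : Tendsto a l atTop)
    (hconv : TendstoUniformlyOn (fun n t => a n * (fn n t - f t)) g l K) :
    Tendsto (fun n => a n * (sInf (fn n '' K) - sInf (f '' K))) l
      (𝓝 (sInf (g '' {t ∈ K | f t = sInf (f '' K)}))) := by
  refine ((hK.tendsto_mul_sInf_image_add_inv_mul_sub hne hf hg).comp ha).congr_dist ?_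
  refine Metric.tendsto_nhds.2 fun ε hε => ?_
  filter_upwards [ha.eventually_gt_atTop 0, Metric.tendstoUniformlyOn_iff.1 hconv (ε / 2)
    (by positivity)] with n han hclose
  set v := fun t => f t + (a n)⁻¹ * g t
  have hclose' : ∀ t ∈ K, |fn n t - v t| ≤ ε / 2 / a n := fun t ht => by
    rw [le_div_iff₀' han]
    calc a n * |fn n t - v t| = |a n * (fn n t - v t)| := by rw [abs_mul, abs_of_pos han]
      _ = |a n * (fn n t - f t) - g t| := by congr 1; simp only [v]; field_simp; ring
      _ ≤ ε / 2 := by rw [← Real.dist_eq, dist_comm]; exact (hclose t ht).le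
  have hinf := abs_sInf_image_sub_sInf_image_le hne
    (v := v) (hK.bddBelow_image (hf.add (continuousOn_const.mul hg))) hclose'
  rw [dist_zero_right, Real.norm_eq_abs, abs_dist, Real.dist_eq]
  calc |a n * (sInf (v '' K) - sInf (f '' K)) - a n * (sInf (fn n '' K) - sInf (f '' K))|
      = a n * |sInf (fn n '' K) - sInf (v '' K)| := by
        rw [← mul_sub, abs_mul, abs_of_pos han, sub_sub_sub_cancel_right, abs_sub_comm]
    _ ≤ a n * (ε / 2 / a n) := by gcongr
    _ < ε := by field_simp; linarith

end Danskin

theorem stmt_7_general (d : ℕ) (T : ℝ) (hT : 0 < T)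
    (φ : EuclideanSpace ℝ (Fin d) → ℝ) (hφ : ContDiff ℝ 1 φ)
    (x : ℝ → EuclideanSpace ℝ (Fin d)) (hx : ContinuousOn x (Icc 0 T))
    (xn : ℕ → ℝ → EuclideanSpace ℝ (Fin d))
    (a : ℕ → ℝ) (ha : Tendsto a atTop atTop)
    (ξ : ℝ → EuclideanSpace ℝ (Fin d)) (hξ : ContinuousOn ξ (Icc 0 T))
    (hconv : TendstoUniformlyOn (fun n t => a n • (xn n t - x t)) ξ atTop (Icc 0 T))
    (M : Set ℝ)
    (hM : M = {τ ∈ Icc 0 T | φ (x τ) = sInf ((fun t => φ (x t)) '' Icc 0 T)}) :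
    Tendsto
      (fun n =>
        a n * (sInf ((fun t => φ (xn n t)) '' Icc 0 T) - sInf ((fun t => φ (x t)) '' Icc 0 T)))
      atTop (𝓝 (sInf ((fun τ => (inner ℝ (ξ τ) (gradient φ (x τ)) : ℝ)) '' M))) := by
  have hK : IsCompact (Icc 0 T) := isCompact_Icc
  have hinner : (fun τ => (inner ℝ (ξ τ) (gradient φ (x τ)) : ℝ)) =
      fun τ => fderiv ℝ φ (x τ) (ξ τ) := funext fun τ => by
    rw [real_inner_comm]
    exact InnerProductSpace.toDual_symm_apply
  rw [hM, hinner]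
  exact hK.tendsto_mul_sInf_image_sub (nonempty_Icc.2 hT.le)
    (hφ.continuous.comp_continuousOn hx)
    ((hφ.continuous_fderiv one_ne_zero).comp_continuousOn hx |>.clm_apply hξ) ha
    (hφ.tendstoUniformlyOn_smul_sub_comp ha (hK.image_of_continuousOn hx)
      (hK.image_of_continuousOn hξ).isBounded hconv)

theorem stmt_7 (d : ℕ) (T : ℝ) (hT : 0 < T)
    (φ : EuclideanSpace ℝ (Fin d) → ℝ) (hφ : ContDiff ℝ 1 φ)
    (x : ℝ → EuclideanSpace ℝ (Fin d)) (hx : ContinuousOn x (Icc 0 T))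
    (xn : ℕ → ℝ → EuclideanSpace ℝ (Fin d)) (hxn : ∀ n, ContinuousOn (xn n) (Icc 0 T))
    (hunif : TendstoUniformlyOn (fun n t => xn n t) x atTop (Icc 0 T))
    (a : ℕ → ℝ) (ha : Tendsto a atTop atTop) (hapos : ∀ n, 0 < a n)
    (ξ : ℝ → EuclideanSpace ℝ (Fin d)) (hξ : ContinuousOn ξ (Icc 0 T))
    (hconv : TendstoUniformlyOn (fun n t => a n • (xn n t - x t)) ξ atTop (Icc 0 T))
    (M : Set ℝ)
    (hM : M = {τ ∈ Icc 0 T | φ (x τ) = sInf ((fun t => φ (x t)) '' Icc 0 T)}) :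
    Tendsto
      (fun n =>
        a n * (sInf ((fun t => φ (xn n t)) '' Icc 0 T) - sInf ((fun t => φ (x t)) '' Icc 0 T)))
      atTop (𝓝 (sInf ((fun τ => (inner ℝ (ξ τ) (gradient φ (x τ)) : ℝ)) '' M))) :=
  stmt_7_general d T hT φ hφ x hx xn a ha ξ hξ hconv M hM
end

section
/- Let Ψ(y) = ∫ K(z)K(z+y) dz for a bounded compactly supported kernel K, let x : [0,T] → ℝ^d be an integral curve of a bounded C¹ vector field v satisfying the averaged nondegeneracy condition |(1/(u−s))∫ₛᵘ v(x(λ))dλ| ≥ γ > 0, and let f, g : ℝ → ℝ^d be bounded functions supported in [0,T] and continuous a.e. Then as h → 0⁺, ∫∫ Ψ((x(s+τh) − x(s))/h) f(s)^T Σ g(s + τh) dτ ds → ∫ ψ(v(x(s))) f(s)^T Σ g(s) ds, where ψ(w) = ∫_ℝ Ψ(wτ) dτ and Σ is a fixed d×d matrix. -/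
/-!
The difference quotient `(x (s + τ h) - x s) / h` is `τ` times the slope of `x` between `s` and
`s + τ h`. By the fundamental theorem of calculus the nondegeneracy hypothesis says that every
slope of `x` between two points of `[0, T]` has norm at least `γ`, while `Ψ` vanishes outside the
ball of radius `2r` when `K` is supported in the ball of radius `r`. So for `h > 0` the integrand
in `(s, τ)` vanishes unless `s ∈ [0, T]` and `|τ| ≤ 2r / γ`, and is uniformly bounded there.
Pointwise, the difference quotient tends to `τ v (x s)` and `g (s + τ h) → g s` wherever `g` is
continuous; `Ψ` is continuous because `K` can be approximated in `L¹` by continuous compactly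
supported functions. Dominated convergence on `ℝ × ℝ` and Fubini give the limit.
-/

open Set MeasureTheory Filter Topology intervalIntegral

theorem aestronglyMeasurable_of_ae_continuousAt {α β : Type*} [TopologicalSpace α]
    [MeasurableSpace α] [OpensMeasurableSpace α] [PseudoMetricSpace β]
    [SecondCountableTopologyEither α β] {μ : Measure α} {f : α → β}
    (hf : ∀ᵐ a ∂μ, ContinuousAt f a) : AEStronglyMeasurable f μ := by
  rw [← Measure.restrict_eq_self_of_ae_mem hf]
  exact ContinuousOn.aestronglyMeasurable (fun _ ha => ContinuousAt.continuousWithinAt ha)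
    (measurableSet_of_continuousAt f)

theorem quasiMeasurePreserving_fst_add_snd_mul (h : ℝ) :
    Measure.QuasiMeasurePreserving (fun p : ℝ × ℝ => p.1 + p.2 * h)
      (volume.prod volume) volume := by
  have hshear : MeasurePreserving (fun p : ℝ × ℝ => (p.2, p.1 + p.2 * h))
      (volume.prod volume) (volume.prod volume) :=
    (MeasurePreserving.skew_product (MeasurePreserving.id volume)
      (measurable_snd.add (measurable_fst.mul_const h))
      (Eventually.of_forall fun a => map_add_right_eq_self volume (a * h))).comp
      Measure.measurePreserving_swap
  exact Measure.quasiMeasurePreserving_snd.comp hshear.quasiMeasurePreserving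

theorem tendsto_integral_integral_of_dominated {α β ι : Type*} [MeasurableSpace α]
    [MeasurableSpace β] {μ : Measure α} {ν : Measure β} [SFinite μ] [SFinite ν]
    {l : Filter ι} [l.NeBot] [l.IsCountablyGenerated] {F : ι → α × β → ℝ} {G : α × β → ℝ}
    (bound : α × β → ℝ) (hF : ∀ i, AEStronglyMeasurable (F i) (μ.prod ν))
    (h_bound : ∀ᶠ i in l, ∀ p, ‖F i p‖ ≤ bound p) (h_int : Integrable bound (μ.prod ν))
    (h_lim : ∀ᵐ p ∂μ.prod ν, Tendsto (fun i => F i p) l (𝓝 (G p))) :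
    Tendsto (fun i => ∫ a, ∫ b, F i (a, b) ∂ν ∂μ) l (𝓝 (∫ a, ∫ b, G (a, b) ∂ν ∂μ)) := by
  have hG : Integrable G (μ.prod ν) := by
    refine h_int.mono' (aestronglyMeasurable_of_tendsto_ae l hF h_lim) ?_
    filter_upwards [h_lim] with p hp
    exact le_of_tendsto hp.norm (h_bound.mono fun i hi => hi p)
  rw [integral_integral (f := fun a b => G (a, b)) hG]
  refine (tendsto_integral_filter_of_dominated_convergence bound (Eventually.of_forall hF)
    (h_bound.mono fun i hi => ae_of_all _ hi) h_int h_lim).congr' ?_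
  filter_upwards [h_bound] with i hi
  exact (integral_integral (f := fun a b => F i (a, b)) (h_int.mono' (hF i) (ae_of_all _ hi))).symm

theorem HasCompactSupport.integrable_of_bound {G : Type*} [NormedAddCommGroup G]
    [MeasurableSpace G] [OpensMeasurableSpace G] {μ : Measure G} [IsFiniteMeasureOnCompacts μ]
    {K : G → ℝ} {M : ℝ} (hK : HasCompactSupport K) (hKm : AEStronglyMeasurable K μ)
    (hKb : ∀ z, |K z| ≤ M) : Integrable K μ :=
  (integrableOn_iff_integrable_of_support_subset (subset_tsupport K)).mp <|
    Measure.integrableOn_of_bounded hK.isCompact.measure_lt_top.ne hKm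
      (ae_of_all _ hKb)

noncomputable def crossCorrelation {G : Type*} [Add G] [MeasurableSpace G] (μ : Measure G)
    (K L : G → ℝ) (y : G) : ℝ :=
  ∫ z, K z * L (z + y) ∂μ

section CrossCorrelation

variable {G : Type*} [NormedAddCommGroup G] [MeasurableSpace G] {μ : Measure G}
  {K L L' : G → ℝ} {M : ℝ}

theorem abs_crossCorrelation_le [BorelSpace G] [μ.IsAddRightInvariant] (hK : ∀ z, |K z| ≤ M)
    (hL : Integrable L μ) (y : G) :
    |crossCorrelation μ K L y| ≤ M * ∫ z, |L z| ∂μ :=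
  calc |crossCorrelation μ K L y| ≤ ∫ z, M * |L (z + y)| ∂μ :=
        norm_integral_le_of_norm_le ((hL.abs.comp_add_right y).const_mul M)
          (ae_of_all _ fun z => by
            rw [Real.norm_eq_abs, abs_mul]
            exact mul_le_mul_of_nonneg_right (hK z) (abs_nonneg _))
    _ = M * ∫ z, |L z| ∂μ := by
        rw [MeasureTheory.integral_const_mul, integral_add_right_eq_self (fun z => |L z|)]

theorem abs_crossCorrelation_sub_le [BorelSpace G] [μ.IsAddRightInvariant]
    (hKm : AEStronglyMeasurable K μ) (hK : ∀ z, |K z| ≤ M) (hL : Integrable L μ)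
    (hL' : Integrable L' μ) (y : G) :
    |crossCorrelation μ K L y - crossCorrelation μ K L' y| ≤ M * ∫ z, |L z - L' z| ∂μ := by
  have hint : ∀ {L : G → ℝ}, Integrable L μ → Integrable (fun z => K z * L (z + y)) μ :=
    fun hL => (hL.comp_add_right y).bdd_mul hKm (ae_of_all _ hK)
  have hsub : crossCorrelation μ K L y - crossCorrelation μ K L' y =
      crossCorrelation μ K (L - L') y := by
    simp only [crossCorrelation, Pi.sub_apply, mul_sub]
    exact (integral_sub (hint hL) (hint hL')).symm
  rw [hsub]
  exact abs_crossCorrelation_le hK (hL.sub hL') y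

theorem continuous_crossCorrelation_of_continuous [BorelSpace G] (hK : Integrable K μ)
    (hL : Continuous L) (hLs : HasCompactSupport L) : Continuous (crossCorrelation μ K L) := by
  obtain ⟨C, hC⟩ := hLs.exists_bound_of_continuous hL
  refine continuous_of_dominated
    (fun y => hK.aestronglyMeasurable.mul (hL.comp (continuous_add_const y)).aestronglyMeasurable)
    (fun y => ae_of_all _ fun z => ?_) (hK.norm.mul_const C)
    (ae_of_all _ fun z => continuous_const.mul (hL.comp (continuous_const_add z)))
  rw [norm_mul]
  exact mul_le_mul_of_nonneg_left (hC _) (norm_nonneg _)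

theorem continuous_crossCorrelation [BorelSpace G] [μ.IsAddRightInvariant]
    [WeaklyLocallyCompactSpace G] [μ.Regular] (hK : ∀ z, |K z| ≤ M) (hKi : Integrable K μ)
    (hL : Integrable L μ) : Continuous (crossCorrelation μ K L) := by
  choose Ln hLn_supp hLn_approx hLn_cont hLn_int using fun n : ℕ =>
    hL.exists_hasCompactSupport_integral_sub_le (Nat.one_div_pos_of_nat (n := n))
  refine TendstoUniformly.continuous (F := fun n => crossCorrelation μ K (Ln n)) (p := atTop) ?_
    (Eventually.of_forall fun n =>
      continuous_crossCorrelation_of_continuous hKi (hLn_cont n) (hLn_supp n)).frequently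
  have hM : 0 ≤ M := (abs_nonneg _).trans (hK 0)
  have h_err : Tendsto (fun n : ℕ => M * (1 / ((n : ℝ) + 1))) atTop (𝓝 0) := by
    simpa using tendsto_one_div_add_atTop_nhds_zero_nat.const_mul M
  rw [Metric.tendstoUniformly_iff]
  intro ε hε
  filter_upwards [h_err.eventually (gt_mem_nhds hε)] with n hn y
  rw [Real.dist_eq]
  refine lt_of_le_of_lt ?_ hn
  calc |crossCorrelation μ K L y - crossCorrelation μ K (Ln n) y|
      ≤ M * ∫ z, |L z - Ln n z| ∂μ :=
        abs_crossCorrelation_sub_le hKi.aestronglyMeasurable hK hL (hLn_int n) y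
    _ ≤ M * (1 / ((n : ℝ) + 1)) := mul_le_mul_of_nonneg_left (hLn_approx n) hM

theorem crossCorrelation_eq_zero_of_support_subset {r : ℝ}
    (hK : Function.support K ⊆ Metric.closedBall 0 r)
    (hL : Function.support L ⊆ Metric.closedBall 0 r) {y : G} (hy : 2 * r < ‖y‖) :
    crossCorrelation μ K L y = 0 := by
  suffices h : ∀ z, K z * L (z + y) = 0 by simp [crossCorrelation, h]
  intro z
  by_contra hne
  have hz : ‖z‖ ≤ r := by simpa using hK (left_ne_zero_of_mul hne)
  have hzy : ‖z + y‖ ≤ r := by simpa using hL (right_ne_zero_of_mul hne)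
  have : ‖y‖ ≤ ‖z + y‖ + ‖z‖ := by simpa using norm_sub_le (z + y) z
  linarith

end CrossCorrelation

section DifferenceQuotient

variable {E : Type*} [NormedAddCommGroup E] [NormedSpace ℝ E] {x : ℝ → E} {T γ : ℝ}

theorem le_norm_slope_of_le_norm_average [CompleteSpace E] {v : ℝ → E}
    (hx : ∀ t, HasDerivAt x (v t) t) (hv : Continuous v)
    (hnd : ∀ s u : ℝ, 0 ≤ s → s < u → u ≤ T → γ ≤ ‖(1 / (u - s)) • ∫ l in s..u, v l‖) :
    ∀ a ∈ Icc 0 T, ∀ b ∈ Icc 0 T, a ≠ b → γ ≤ ‖slope x a b‖ := by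
  intro a ha b hb hab
  wlog hlt : a < b generalizing a b
  · rw [slope_comm]
    exact this b hb a ha hab.symm (hab.lt_or_gt.resolve_left hlt)
  have hftc : ∫ l in a..b, v l = x b - x a :=
    integral_eq_sub_of_hasDerivAt (fun t _ => hx t) (hv.intervalIntegrable a b)
  simpa [slope_def_module, hftc] using hnd a b ha.1 hlt hb.2

theorem abs_mul_le_norm_smul_sub
    (hsl : ∀ a ∈ Icc 0 T, ∀ b ∈ Icc 0 T, a ≠ b → γ ≤ ‖slope x a b‖) {h s τ : ℝ} (hh : 0 < h)
    (hs : s ∈ Icc 0 T) (hsτ : s + τ * h ∈ Icc 0 T) :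
    |τ| * γ ≤ ‖(1 / h) • (x (s + τ * h) - x s)‖ := by
  rcases eq_or_ne τ 0 with rfl | hτ
  · simp
  have hslope : (1 / h) • (x (s + τ * h) - x s) = τ • slope x s (s + τ * h) := by
    rw [slope_def_module, smul_smul, add_sub_cancel_left]
    congr 1
    field_simp
  rw [hslope, norm_smul, Real.norm_eq_abs]
  refine mul_le_mul_of_nonneg_left (hsl s hs _ hsτ ?_) (abs_nonneg τ)
  simpa using mul_ne_zero hτ hh.ne'

theorem tendsto_smul_sub_nhdsGT {x' : E} {s : ℝ} (hx : HasDerivAt x x' s) (τ : ℝ) :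
    Tendsto (fun h => (1 / h) • (x (s + τ * h) - x s)) (𝓝[>] 0) (𝓝 (τ • x')) := by
  have hcomp : HasDerivAt (fun h => x (s + τ * h)) (τ • x') 0 := by
    have hlin : HasDerivAt (fun h : ℝ => s + τ * h) τ 0 := by
      simpa using ((hasDerivAt_id (0 : ℝ)).const_mul τ).const_add s
    exact hx.scomp_of_eq 0 hlin (by simp)
  simpa using hcomp.tendsto_slope_zero_right

end DifferenceQuotient

section Integrand

variable {E : Type*} [NormedAddCommGroup E] [InnerProductSpace ℝ E] {Φ : E → ℝ}
  {x f g : ℝ → E} {A : E →L[ℝ] E} {T γ ρ CΦ Mf Mg : ℝ}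

noncomputable def diffQuotientIntegrand (Φ : E → ℝ) (x f g : ℝ → E) (A : E →L[ℝ] E) (h : ℝ)
    (p : ℝ × ℝ) : ℝ :=
  Φ ((1 / h) • (x (p.1 + p.2 * h) - x p.1)) * inner ℝ (f p.1) (A (g (p.1 + p.2 * h)))

theorem aestronglyMeasurable_diffQuotientIntegrand (hΦ : Continuous Φ) (hx : Continuous x)
    (hf : AEStronglyMeasurable f volume) (hg : AEStronglyMeasurable g volume) (h : ℝ) :
    AEStronglyMeasurable (diffQuotientIntegrand Φ x f g A h) (volume.prod volume) := by
  have hΦx : Continuous fun p : ℝ × ℝ => Φ ((1 / h) • (x (p.1 + p.2 * h) - x p.1)) := by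
    fun_prop
  exact hΦx.aestronglyMeasurable.mul
    ((hf.comp_quasiMeasurePreserving Measure.quasiMeasurePreserving_fst).inner
      (A.continuous.comp_aestronglyMeasurable
        (hg.comp_quasiMeasurePreserving (quasiMeasurePreserving_fst_add_snd_mul h))))

theorem abs_diffQuotientIntegrand_le (hΦb : ∀ y, |Φ y| ≤ CΦ)
    (hfb : ∀ s, ‖f s‖ ≤ Mf) (hgb : ∀ s, ‖g s‖ ≤ Mg) (h : ℝ) (p : ℝ × ℝ) :
    |diffQuotientIntegrand Φ x f g A h p| ≤ CΦ * (Mf * (‖A‖ * Mg)) := by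
  rw [diffQuotientIntegrand, abs_mul]
  gcongr
  · exact (abs_nonneg _).trans (hΦb 0)
  · exact hΦb _
  calc |inner ℝ (f p.1) (A (g (p.1 + p.2 * h)))|
      ≤ ‖f p.1‖ * ‖A (g (p.1 + p.2 * h))‖ := abs_real_inner_le_norm _ _
    _ ≤ Mf * (‖A‖ * Mg) := by
      gcongr
      · exact (norm_nonneg _).trans (hfb 0)
      · exact hfb _
      · exact A.le_opNorm_of_le (hgb _)

theorem support_diffQuotientIntegrand_subset (hΦ0 : ∀ y, ρ < ‖y‖ → Φ y = 0)
    (hγ : 0 < γ) (hsl : ∀ a ∈ Icc 0 T, ∀ b ∈ Icc 0 T, a ≠ b → γ ≤ ‖slope x a b‖)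
    (hfsupp : Function.support f ⊆ Icc 0 T) (hgsupp : Function.support g ⊆ Icc 0 T)
    {h : ℝ} (hh : 0 < h) :
    Function.support (diffQuotientIntegrand Φ x f g A h) ⊆ Icc 0 T ×ˢ Icc (-(ρ / γ)) (ρ / γ) := by
  rintro ⟨s, τ⟩ hp
  have hΦne := left_ne_zero_of_mul hp
  have hinner := right_ne_zero_of_mul hp
  have hs : s ∈ Icc 0 T := hfsupp fun hf0 => hinner (by simp [hf0])
  have hsτ : s + τ * h ∈ Icc 0 T := hgsupp fun hg0 => hinner (by simp [hg0])
  have hτ : |τ| * γ ≤ ρ :=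
    (abs_mul_le_norm_smul_sub hsl hh hs hsτ).trans (not_lt.mp (mt (hΦ0 _) hΦne))
  exact ⟨hs, abs_le.mp ((le_div_iff₀ hγ).mpr hτ)⟩

theorem tendsto_diffQuotientIntegrand {x' : E} {s : ℝ} (hΦ : Continuous Φ)
    (hx : HasDerivAt x x' s) (hg : ContinuousAt g s) (τ : ℝ) :
    Tendsto (fun h => diffQuotientIntegrand Φ x f g A h (s, τ)) (𝓝[>] 0)
      (𝓝 (Φ (τ • x') * inner ℝ (f s) (A (g s)))) := by
  have hshift : Tendsto (fun h : ℝ => s + τ * h) (𝓝[>] 0) (𝓝 s) :=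
    tendsto_nhdsWithin_of_tendsto_nhds
      ((by fun_prop : Continuous fun h : ℝ => s + τ * h).tendsto' 0 s (by simp))
  exact ((hΦ.tendsto _).comp (tendsto_smul_sub_nhdsGT hx τ)).mul
    (tendsto_const_nhds.inner ((A.continuous.tendsto _).comp (hg.tendsto.comp hshift)))

theorem norm_diffQuotientIntegrand_le_indicator (hΦb : ∀ y, |Φ y| ≤ CΦ)
    (hΦ0 : ∀ y, ρ < ‖y‖ → Φ y = 0) (hγ : 0 < γ)
    (hsl : ∀ a ∈ Icc 0 T, ∀ b ∈ Icc 0 T, a ≠ b → γ ≤ ‖slope x a b‖)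
    (hfb : ∀ s, ‖f s‖ ≤ Mf) (hgb : ∀ s, ‖g s‖ ≤ Mg)
    (hfsupp : Function.support f ⊆ Icc 0 T) (hgsupp : Function.support g ⊆ Icc 0 T)
    {h : ℝ} (hh : 0 < h) (p : ℝ × ℝ) :
    ‖diffQuotientIntegrand Φ x f g A h p‖ ≤
      (Icc 0 T ×ˢ Icc (-(ρ / γ)) (ρ / γ)).indicator (fun _ => CΦ * (Mf * (‖A‖ * Mg))) p := by
  rw [Real.norm_eq_abs]
  by_cases hp : p ∈ Icc 0 T ×ˢ Icc (-(ρ / γ)) (ρ / γ)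
  · rw [indicator_of_mem hp]
    exact abs_diffQuotientIntegrand_le hΦb hfb hgb h p
  · rw [indicator_of_notMem hp, Function.notMem_support.mp
      (mt (support_diffQuotientIntegrand_subset hΦ0 hγ hsl hfsupp hgsupp hh ·) hp), abs_zero]

theorem tendsto_integral_integral_diffQuotientIntegrand {x' : ℝ → E}
    (hΦ : Continuous Φ) (hΦb : ∀ y, |Φ y| ≤ CΦ) (hΦ0 : ∀ y, ρ < ‖y‖ → Φ y = 0)
    (hx : ∀ t, HasDerivAt x (x' t) t) (hγ : 0 < γ)
    (hsl : ∀ a ∈ Icc 0 T, ∀ b ∈ Icc 0 T, a ≠ b → γ ≤ ‖slope x a b‖)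
    (hfb : ∀ s, ‖f s‖ ≤ Mf) (hgb : ∀ s, ‖g s‖ ≤ Mg) (hf : AEStronglyMeasurable f volume)
    (hg : ∀ᵐ s, ContinuousAt g s)
    (hfsupp : Function.support f ⊆ Icc 0 T) (hgsupp : Function.support g ⊆ Icc 0 T) :
    Tendsto (fun h : ℝ => ∫ s, ∫ τ, diffQuotientIntegrand Φ x f g A h (s, τ)) (𝓝[>] 0)
      (𝓝 (∫ s, ∫ τ : ℝ, Φ (τ • x' s) * inner ℝ (f s) (A (g s)))) := by
  have hxc : Continuous x := continuous_iff_continuousAt.mpr fun t => (hx t).continuousAt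
  refine tendsto_integral_integral_of_dominated
    (G := fun p => Φ (p.2 • x' p.1) * inner ℝ (f p.1) (A (g p.1))) _
    (aestronglyMeasurable_diffQuotientIntegrand hΦ hxc hf
      (aestronglyMeasurable_of_ae_continuousAt hg))
    (eventually_nhdsWithin_of_forall fun h hh =>
      norm_diffQuotientIntegrand_le_indicator hΦb hΦ0 hγ hsl hfb hgb hfsupp hgsupp hh) ?_ ?_
  · rw [integrable_indicator_iff (measurableSet_Icc.prod measurableSet_Icc)]
    exact integrableOn_const (isCompact_Icc.prod isCompact_Icc).measure_lt_top.ne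
  · filter_upwards [Measure.quasiMeasurePreserving_fst.ae hg] with p hp
    exact tendsto_diffQuotientIntegrand hΦ (hx p.1) hp p.2

end Integrand

theorem stmt_16_general (d : ℕ) (T : ℝ)
    (K : EuclideanSpace ℝ (Fin d) → ℝ)
    (hKb : ∃ M, ∀ z, |K z| ≤ M) (hKm : Measurable K) (hKsupp : HasCompactSupport K)
    (Ψ : EuclideanSpace ℝ (Fin d) → ℝ) (hΨ : ∀ y, Ψ y = ∫ z, K z * K (z + y))
    (ψ : EuclideanSpace ℝ (Fin d) → ℝ) (hψ : ∀ w, ψ w = ∫ τ : ℝ, Ψ (τ • w))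
    (v : EuclideanSpace ℝ (Fin d) → EuclideanSpace ℝ (Fin d))
    (hv : ContDiff ℝ 1 v)
    (x : ℝ → EuclideanSpace ℝ (Fin d)) (hx : ∀ t, HasDerivAt x (v (x t)) t)
    (γ : ℝ) (hγ : 0 < γ)
    (hnd : ∀ s u : ℝ, 0 ≤ s → s < u → u ≤ T →
      γ ≤ ‖(1 / (u - s)) • ∫ l in s..u, v (x l)‖)
    (Sig : Matrix (Fin d) (Fin d) ℝ)
    (f g : ℝ → EuclideanSpace ℝ (Fin d))
    (hfb : ∃ M, ∀ s, ‖f s‖ ≤ M) (hgb : ∃ M, ∀ s, ‖g s‖ ≤ M)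
    (hfsupp : Function.support f ⊆ Icc 0 T) (hgsupp : Function.support g ⊆ Icc 0 T)
    (hfae : ∀ᵐ s : ℝ, ContinuousAt f s) (hgae : ∀ᵐ s : ℝ, ContinuousAt g s) :
    Tendsto
      (fun h : ℝ => ∫ s : ℝ, ∫ τ : ℝ,
        Ψ ((1 / h) • (x (s + τ * h) - x s)) *
          (inner ℝ (f s) (Matrix.toEuclideanLin Sig (g (s + τ * h))) : ℝ))
      (𝓝[>] 0)
      (𝓝 (∫ s : ℝ, ψ (v (x s)) * (inner ℝ (f s) (Matrix.toEuclideanLin Sig (g s)) : ℝ))) := by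
  obtain ⟨MK, hKb⟩ := hKb
  obtain ⟨Mf, hfb⟩ := hfb
  obtain ⟨Mg, hgb⟩ := hgb
  obtain ⟨r, hr⟩ := hKsupp.isCompact.isBounded.subset_closedBall 0
  have hKr : Function.support K ⊆ Metric.closedBall 0 r := (subset_tsupport K).trans hr
  have hKi : Integrable K := hKsupp.integrable_of_bound hKm.aestronglyMeasurable hKb
  obtain rfl : Ψ = crossCorrelation volume K K := funext hΨ
  have hxc : Continuous x := continuous_iff_continuousAt.mpr fun t => (hx t).continuousAt
  simp only [hψ, ← MeasureTheory.integral_mul_const]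
  exact tendsto_integral_integral_diffQuotientIntegrand (x' := fun t => v (x t))
    (A := LinearMap.toContinuousLinearMap (Matrix.toEuclideanLin Sig))
    (continuous_crossCorrelation hKb hKi hKi)
    (abs_crossCorrelation_le hKb hKi)
    (fun _ hy => crossCorrelation_eq_zero_of_support_subset hKr hKr hy) hx hγ
    (le_norm_slope_of_le_norm_average hx (hv.continuous.comp hxc) hnd) hfb hgb
    (aestronglyMeasurable_of_ae_continuousAt hfae) hgae hfsupp hgsupp

theorem stmt_16 (d : ℕ) (T : ℝ) (hT : 0 < T)
    (K : EuclideanSpace ℝ (Fin d) → ℝ)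
    (hKb : ∃ M, ∀ z, |K z| ≤ M) (hKm : Measurable K) (hKsupp : HasCompactSupport K)
    (Ψ : EuclideanSpace ℝ (Fin d) → ℝ) (hΨ : ∀ y, Ψ y = ∫ z, K z * K (z + y))
    (ψ : EuclideanSpace ℝ (Fin d) → ℝ) (hψ : ∀ w, ψ w = ∫ τ : ℝ, Ψ (τ • w))
    (v : EuclideanSpace ℝ (Fin d) → EuclideanSpace ℝ (Fin d))
    (hv : ContDiff ℝ 1 v) (hvb : ∃ M, ∀ y, ‖v y‖ ≤ M)
    (x : ℝ → EuclideanSpace ℝ (Fin d)) (hx : ∀ t, HasDerivAt x (v (x t)) t)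
    (γ : ℝ) (hγ : 0 < γ)
    (hnd : ∀ s u : ℝ, 0 ≤ s → s < u → u ≤ T →
      γ ≤ ‖(1 / (u - s)) • ∫ l in s..u, v (x l)‖)
    (Sig : Matrix (Fin d) (Fin d) ℝ)
    (f g : ℝ → EuclideanSpace ℝ (Fin d))
    (hfb : ∃ M, ∀ s, ‖f s‖ ≤ M) (hgb : ∃ M, ∀ s, ‖g s‖ ≤ M)
    (hfsupp : Function.support f ⊆ Icc 0 T) (hgsupp : Function.support g ⊆ Icc 0 T)
    (hfae : ∀ᵐ s : ℝ, ContinuousAt f s) (hgae : ∀ᵐ s : ℝ, ContinuousAt g s) :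
    Tendsto
      (fun h : ℝ => ∫ s : ℝ, ∫ τ : ℝ,
        Ψ ((1 / h) • (x (s + τ * h) - x s)) *
          (inner ℝ (f s) (Matrix.toEuclideanLin Sig (g (s + τ * h))) : ℝ))
      (𝓝[>] 0)
      (𝓝 (∫ s : ℝ, ψ (v (x s)) * (inner ℝ (f s) (Matrix.toEuclideanLin Sig (g s)) : ℝ))) :=
  stmt_16_general d T K hKb hKm hKsupp Ψ hΨ ψ hψ v hv x hx γ hγ hnd Sig f g hfb hgb hfsupp hgsupp
    hfae hgae
end
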